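/- Let W̃₃ be the algebra on ℂ⁵ with bracket [e₃,e₄] = e₂, [e₄,e₃] = −e₂, [e₃,e₅] = e₁, [e₅,e₃] = −e₁, [e₄,e₅] = e₃, [e₅,e₄] = −e₃, [e₅,e₅] = e₂. Then this bracket satisfies both the left and the right Leibniz identity (so W̃₃ is a symmetric, nilpotent, non-Lie Leibniz algebra), and the bilinear form B on ℂ⁵ defined by B(e₁,e₄) = B(e₄,e₁) = −1, B(e₂,e₅) = B(e₅,e₂) = 1, B(e₃,e₃) = 1, B(e₄,e₄) = 1, B(e₅,e₅) = 1, all other basis values 0, is symmetric, nondegenerate and invariant for this bracket. In particular W̃₃ is a metric Leibniz algebra. -/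
import Mathlib


/-- The bracket of the algebra `W̃₃` on `ℂ⁵`: `[e₃,e₄] = e₂`, `[e₄,e₃] = -e₂`,
`[e₃,e₅] = e₁`, `[e₅,e₃] = -e₁`, `[e₄,e₅] = e₃`, `[e₅,e₄] = -e₃`,
`[e₅,e₅] = e₂`, all other basis brackets zero, in coordinates. -/
def W3tildeBracket (x y : Fin 5 → ℂ) : Fin 5 → ℂ :=
  ![x 2 * y 4 - x 4 * y 2,
    x 2 * y 3 - x 3 * y 2 + x 4 * y 4,
    x 3 * y 4 - x 4 * y 3,
    0,
    0]

/-- The bilinear form `B` on `ℂ⁵` with `B(e₁,e₄) = B(e₄,e₁) = -1`,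
`B(e₂,e₅) = B(e₅,e₂) = 1`, `B(e₃,e₃) = 1`, `B(e₄,e₄) = 1`, `B(e₅,e₅) = 1`,
all other basis values `0`, in coordinates. -/
def W3tildeForm (x y : Fin 5 → ℂ) : ℂ :=
  -(x 0 * y 3) - x 3 * y 0 + x 1 * y 4 + x 4 * y 1 + x 2 * y 2 + x 3 * y 3 + x 4 * y 4

/-- The bracket of `W̃₃` satisfies both Leibniz identities (so `W̃₃` is a
symmetric, nilpotent, non-Lie Leibniz algebra), and `B` is a symmetric,
nondegenerate, invariant bilinear form for it.  In particular `W̃₃` is a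
metric Leibniz algebra. -/
theorem W3tilde_is_metric :
    (∀ x y z : Fin 5 → ℂ,
      W3tildeBracket x (W3tildeBracket y z) =
        W3tildeBracket (W3tildeBracket x y) z + W3tildeBracket y (W3tildeBracket x z)) ∧
    (∀ x y z : Fin 5 → ℂ,
      W3tildeBracket x (W3tildeBracket y z) =
        W3tildeBracket (W3tildeBracket x y) z - W3tildeBracket (W3tildeBracket x z) y) ∧
    (∀ x y z w : Fin 5 → ℂ,
      W3tildeBracket (W3tildeBracket (W3tildeBracket x y) z) w = 0) ∧
    W3tildeBracket ![0, 0, 0, 0, 1] ![0, 0, 0, 0, 1] ≠ 0 ∧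
    (∀ x y : Fin 5 → ℂ, W3tildeForm x y = W3tildeForm y x) ∧
    (∀ v : Fin 5 → ℂ, (∀ w : Fin 5 → ℂ, W3tildeForm v w = 0) → v = 0) ∧
    (∀ x y z : Fin 5 → ℂ,
      W3tildeForm (W3tildeBracket x y) z = W3tildeForm x (W3tildeBracket y z)) := by
  refine ⟨?_, ?_, ?_, ?_, ?_, ?_, ?_⟩
  · intro x y z
    funext i
    fin_cases i <;> simp [W3tildeBracket] <;> ring
  · intro x y z
    funext i
    fin_cases i <;> simp [W3tildeBracket] <;> ring
  · intro x y z w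
    funext i
    fin_cases i <;> simp [W3tildeBracket] <;> ring
  · intro h
    have := congrFun h 1
    simp [W3tildeBracket] at this
  · intro x y
    simp [W3tildeForm]; ring
  · intro v h
    funext i
    have h0 := h ![0,0,0,1,0]
    have h1 := h ![0,0,0,0,1]
    have h2 := h ![0,0,1,0,0]
    have h3 := h ![1,0,0,0,0]
    have h4 := h ![0,1,0,0,0]
    simp [W3tildeForm] at h0 h1 h2 h3 h4
    fin_cases i
    · simp; linear_combination h3 - h0
    · simp; linear_combination h1 - h4
    · simpa using h2
    · simpa using h3
    · simpa using h4
  · intro x y z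
    simp [W3tildeForm, W3tildeBracket]; ring
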